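/- arXiv:math-ph/0604047 — 2 statements merged into one kernel-verified Lean document; each statement's English description precedes it below -/
import Mathlib

section
/- Define polynomials p_m(f_{-1}, f_{-2}, f_{-3}, \ldots) for m \le -2 by p_m = Res_v v^{-2-m} (1/(f(v)+f_{-1})) where the rational function is expanded for |f(v)| large. Then these satisfy the recursion p_{-2} = 1 and p_{-m} = -\sum_{k=1}^{m-2} f_{-k} \, p_{-m+k} for m \ge 3 (with f_{-1} a free variable). In particular p_{-3} = -f_{-1} and p_{-4} = -f_{-2} + f_{-1}^2. -/
open scoped BigOperators

/-- The formal series `f(v) = v + ∑_{m ≤ -2} f_m v^{1+m}` with coefficients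
`c m = f_m`, as a Laurent series in `X = v⁻¹` (coefficient of `X^k` is the
coefficient of `v^{-k}`). -/
noncomputable def fser (c : ℤ → ℂ) : LaurentSeries ℂ :=
  HahnSeries.single (-1 : ℤ) (1 : ℂ) +
    HahnSeries.ofPowerSeries ℤ ℂ
      (PowerSeries.mk fun n : ℕ => if n = 0 then 0 else c (-1 - (n : ℤ)))

/-- `p_m = Res_v v^{-2-m}·(1/(f(v)+f₋₁))`, the rational function being expanded
for `|f(v)|` large; in the Laurent field in `X = v⁻¹` this expansion is exactly
the inverse `(f + f₋₁)⁻¹`, and taking `Res_v v^{-2-m}·g` means extracting the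
coefficient of `v^{1+m}`, i.e. of `X^{-1-m}`.  Here `a` stands for `f₋₁`. -/
noncomputable def pPoly (c : ℤ → ℂ) (a : ℂ) (m : ℤ) : ℂ :=
  ((fser c + HahnSeries.single (0 : ℤ) a)⁻¹).coeff (-1 - m)

noncomputable def Hser (c : ℤ → ℂ) (a : ℂ) : PowerSeries ℂ :=
  PowerSeries.mk fun n : ℕ => if n = 0 then 1 else if n = 1 then a else c (-(n : ℤ))

lemma coeff_ofPS_neg (x : PowerSeries ℂ) (n : ℤ) (hn : n < 0) :
    (HahnSeries.ofPowerSeries ℤ ℂ x).coeff n = 0 := by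
  rw [HahnSeries.ofPowerSeries_apply, HahnSeries.embDomain_notin_range]
  rintro ⟨m, hm⟩
  change (m : ℤ) = n at hm
  omega

lemma fser_eq (c : ℤ → ℂ) (a : ℂ) : fser c + HahnSeries.single (0 : ℤ) a
    = HahnSeries.single (-1 : ℤ) (1 : ℂ) * HahnSeries.ofPowerSeries ℤ ℂ (Hser c a) := by
  ext n
  have h1 : (HahnSeries.single (-1 : ℤ) (1 : ℂ) *
      HahnSeries.ofPowerSeries ℤ ℂ (Hser c a)).coeff n
      = (HahnSeries.ofPowerSeries ℤ ℂ (Hser c a)).coeff (n + 1) := by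
    have := HahnSeries.coeff_single_mul_add (r := (1 : ℂ))
      (x := HahnSeries.ofPowerSeries ℤ ℂ (Hser c a)) (a := n + 1) (b := (-1 : ℤ))
    simpa using this
  rw [h1]
  rcases lt_trichotomy n (-1 : ℤ) with h | h | h
  · rw [coeff_ofPS_neg _ _ (by omega)]
    simp [fser, HahnSeries.coeff_single, coeff_ofPS_neg _ _ (by omega : n < 0), h.ne]
    omega
  · subst h
    have : ((0:ℕ) : ℤ) = (-1 : ℤ) + 1 := by norm_num
    rw [show (-1 : ℤ) + 1 = ((0:ℕ) : ℤ) by norm_num, HahnSeries.ofPowerSeries_apply_coeff]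
    simp [fser, Hser, coeff_ofPS_neg _ _ (by norm_num : (-1:ℤ) < 0)]
  · obtain ⟨k, rfl⟩ : ∃ k : ℕ, n = (k : ℤ) := ⟨n.toNat, by omega⟩
    rw [show (k : ℤ) + 1 = ((k+1 : ℕ) : ℤ) by push_cast; ring,
      HahnSeries.ofPowerSeries_apply_coeff]
    simp only [fser, HahnSeries.coeff_add, HahnSeries.coeff_single,
      HahnSeries.ofPowerSeries_apply_coeff, Hser, PowerSeries.coeff_mk]
    rcases Nat.eq_zero_or_pos k with rfl | hk
    · norm_num
    · have hk0 : (k : ℤ) ≠ -1 := by omega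
      have hk1 : (k : ℤ) ≠ 0 := by omega
      have hk2 : k ≠ 0 := by omega
      have hk3 : k + 1 ≠ 1 := by omega
      simp only [if_neg hk0, if_neg hk1, if_neg hk2, if_neg hk3, if_neg (Nat.succ_ne_zero k)]
      rw [zero_add, add_zero]
      congr 1
      push_cast
      ring

lemma Hser_const (c : ℤ → ℂ) (a : ℂ) :
    PowerSeries.constantCoeff (Hser c a) = 1 := by
  simp [Hser, ← PowerSeries.coeff_zero_eq_constantCoeff]

lemma ginv (c : ℤ → ℂ) (a : ℂ) : (fser c + HahnSeries.single (0 : ℤ) a)⁻¹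
    = HahnSeries.single (1 : ℤ) (1 : ℂ) * HahnSeries.ofPowerSeries ℤ ℂ (Hser c a)⁻¹ := by
  apply inv_eq_of_mul_eq_one_right
  rw [fser_eq]
  have : HahnSeries.single (-1 : ℤ) (1 : ℂ) * HahnSeries.ofPowerSeries ℤ ℂ (Hser c a) *
      (HahnSeries.single (1 : ℤ) (1 : ℂ) * HahnSeries.ofPowerSeries ℤ ℂ (Hser c a)⁻¹)
      = (HahnSeries.single (-1 : ℤ) (1 : ℂ) * HahnSeries.single (1 : ℤ) (1 : ℂ)) *
        HahnSeries.ofPowerSeries ℤ ℂ ((Hser c a) * (Hser c a)⁻¹) := by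
    rw [map_mul]; ring
  rw [this, PowerSeries.mul_inv_cancel _ (by rw [Hser_const]; norm_num),
    HahnSeries.single_mul_single]
  norm_num

lemma pPoly_eq (c : ℤ → ℂ) (a : ℂ) (n : ℕ) :
    pPoly c a (-2 - (n : ℤ)) = PowerSeries.coeff n (Hser c a)⁻¹ := by
  unfold pPoly
  rw [ginv, show -1 - (-2 - (n : ℤ)) = (n : ℤ) + 1 by ring]
  have := HahnSeries.coeff_single_mul_add (r := (1 : ℂ))
    (x := HahnSeries.ofPowerSeries ℤ ℂ (Hser c a)⁻¹) (a := (n : ℤ)) (b := (1 : ℤ))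
  rw [this, one_mul, HahnSeries.ofPowerSeries_apply_coeff]

lemma q_rec (c : ℤ → ℂ) (a : ℂ) (j : ℕ) (hj : 1 ≤ j) :
    PowerSeries.coeff j (Hser c a)⁻¹
      = - ∑ i ∈ Finset.range j,
          (if i + 1 = 1 then a else c (-((i : ℤ) + 1))) *
            PowerSeries.coeff (j - 1 - i) (Hser c a)⁻¹ := by
  have h := PowerSeries.mul_inv_cancel (Hser c a) (by rw [Hser_const]; norm_num)
  have h2 := congrArg (PowerSeries.coeff j) h
  rw [PowerSeries.coeff_mul, PowerSeries.coeff_one, if_neg (by omega),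
    Finset.Nat.sum_antidiagonal_eq_sum_range_succ_mk, Finset.sum_range_succ'] at h2
  simp only [Nat.sub_zero, Hser, PowerSeries.coeff_mk, if_pos rfl, one_mul] at h2
  have h3 : PowerSeries.coeff j (Hser c a)⁻¹
      = - ∑ i ∈ Finset.range j, (PowerSeries.coeff (i+1) (Hser c a)) *
          PowerSeries.coeff (j - (i+1)) (Hser c a)⁻¹ := by
    rw [eq_neg_iff_add_eq_zero, add_comm, ← h2]
    simp [Hser]
  rw [h3]
  congr 1
  apply Finset.sum_congr rfl
  intro i hi
  simp only [Finset.mem_range] at hi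
  have : j - (i + 1) = j - 1 - i := by omega
  rw [this, Hser, PowerSeries.coeff_mk, if_neg (Nat.succ_ne_zero i)]
  rcases Nat.eq_zero_or_pos i with rfl | hi0
  · simp
  · rw [if_neg (by omega), if_neg (by omega)]
    norm_num

lemma q_zero (c : ℤ → ℂ) (a : ℂ) : PowerSeries.coeff 0 (Hser c a)⁻¹ = 1 := by
  rw [PowerSeries.coeff_zero_eq_constantCoeff, PowerSeries.constantCoeff_inv, Hser_const]
  norm_num

/-- The polynomials `p_m` satisfy `p₋₂ = 1` and the recursion
`p₋ₘ = -∑_{k=1}^{m-2} f₋ₖ p₋ₘ₊ₖ` for `m ≥ 3` (with `f₋₁ = a` a free variable);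
in particular `p₋₃ = -f₋₁` and `p₋₄ = -f₋₂ + f₋₁²`. -/
theorem pPoly_recursion (c : ℤ → ℂ) (a : ℂ) :
    pPoly c a (-2) = 1 ∧
    (∀ m : ℕ, 3 ≤ m →
      pPoly c a (-(m : ℤ)) =
        - ∑ k ∈ Finset.Icc 1 (m - 2),
            (if k = 1 then a else c (-(k : ℤ))) * pPoly c a (-(m : ℤ) + (k : ℤ))) ∧
    pPoly c a (-3) = -a ∧
    pPoly c a (-4) = -c (-2) + a ^ 2 := by
  have hp2 : pPoly c a (-2) = 1 := by
    have h := pPoly_eq c a 0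
    norm_num at h
    rw [h, Hser_const]
    norm_num
  have hrec : ∀ m : ℕ, 3 ≤ m →
      pPoly c a (-(m : ℤ)) =
        - ∑ k ∈ Finset.Icc 1 (m - 2),
            (if k = 1 then a else c (-(k : ℤ))) * pPoly c a (-(m : ℤ) + (k : ℤ)) := by
    intro m hm
    have h1 : -(m : ℤ) = -2 - ((m - 2 : ℕ) : ℤ) := by omega
    rw [h1, pPoly_eq, q_rec c a (m - 2) (by omega)]
    congr 1
    rw [← Finset.Ico_add_one_right_eq_Icc, Finset.sum_Ico_eq_sum_range]
    have hr : m - 2 + 1 - 1 = m - 2 := by omega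
    rw [hr]
    apply Finset.sum_congr rfl
    intro i hi
    simp only [Finset.mem_range] at hi
    have h2 : -2 - ((m - 2 : ℕ) : ℤ) + ((1 + i : ℕ) : ℤ) = -2 - ((m - 2 - 1 - i : ℕ) : ℤ) := by
      push_cast
      omega
    rw [h2, pPoly_eq]
    congr 1
    rcases Nat.eq_zero_or_pos i with rfl | hi0
    · simp
    · rw [if_neg (by omega), if_neg (by omega)]
      congr 1
      push_cast
      ring
  have hp3 : pPoly c a (-3) = -a := by
    have h := hrec 3 (by norm_num)
    norm_num [Finset.Icc_self, Finset.sum_singleton, hp2] at h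
    exact h
  have hp4 : pPoly c a (-4) = -c (-2) + a ^ 2 := by
    have h := hrec 4 (by norm_num)
    rw [show Finset.Icc 1 2 = ({1, 2} : Finset ℕ) from rfl,
      Finset.sum_pair (by norm_num)] at h
    norm_num [hp2] at h
    rw [hp3] at h
    rw [h]
    ring
  exact ⟨hp2, hrec, hp3, hp4⟩
end

section
/- Let \kappa > 0, \alpha = 1/\sqrt{\kappa}, and let \alpha_1, \ldots, \alpha_M be real numbers. Define h(x; y_1, \ldots, y_M) = \prod_K (x - y_K)^{2\alpha\alpha_K} \prod_{J<K} (y_J - y_K)^{2\alpha_J\alpha_K} on the domain where all factors are positive. Then h satisfies the null field equation (\frac{\kappa}{2}\partial_x^2 + \sum_K (\frac{2}{y_K - x}\partial_{y_K} - \frac{2\delta_K}{(y_K-x)^2})) h = 0, where \delta_K = \alpha_K^2 - (\frac{\sqrt{\kappa}}{2} - \frac{2}{\sqrt{\kappa}})\alpha_K. -/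
open scoped BigOperators

/-- The Coulomb gas correlation function
`h(x; y₁,…,y_M) = ∏_K (x - y_K)^(2ααK) · ∏_{J<K} (y_J - y_K)^(2αJαK)`
with `α = 1/√κ`. -/
noncomputable def coulombH (κ : ℝ) {M : ℕ} (αv : Fin M → ℝ) (x : ℝ) (y : Fin M → ℝ) : ℝ :=
  (∏ K, (x - y K) ^ (2 * (1 / Real.sqrt κ) * αv K)) *
    ∏ p ∈ Finset.univ.filter (fun p : Fin M × Fin M => p.1 < p.2),
      (y p.1 - y p.2) ^ (2 * αv p.1 * αv p.2)

namespace CoulombNullAux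

open Finset


lemma sq_split {M : ℕ} (g : Fin M → Fin M → ℝ) (hg : ∀ J K, g J K = g K J) :
    ∑ K, ∑ J, g K J
      = (∑ K, g K K)
        + 2 * ∑ q ∈ univ.filter (fun q : Fin M × Fin M => q.1 < q.2), g q.1 q.2 := by
  have h1 : ∑ K, ∑ J, g K J = ∑ q : Fin M × Fin M, g q.1 q.2 := by
    rw [← Finset.univ_product_univ, Finset.sum_product]
  rw [h1, ← Finset.sum_filter_add_sum_filter_not Finset.univ
    (fun q : Fin M × Fin M => q.1 < q.2) (fun q => g q.1 q.2)]
  have h2 : ∑ q ∈ univ.filter (fun q : Fin M × Fin M => ¬ q.1 < q.2), g q.1 q.2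
      = (∑ K, g K K)
        + ∑ q ∈ univ.filter (fun q : Fin M × Fin M => q.1 < q.2), g q.1 q.2 := by
    rw [← Finset.sum_filter_add_sum_filter_not
      (univ.filter (fun q : Fin M × Fin M => ¬ q.1 < q.2))
      (fun q : Fin M × Fin M => q.1 = q.2) (fun q => g q.1 q.2),
      Finset.filter_filter, Finset.filter_filter]
    congr 1
    · refine Finset.sum_nbij' (fun q => q.1) (fun K => (K, K)) ?_ ?_ ?_ ?_ ?_
      · intro a _; exact Finset.mem_univ _
      · intro a _; simp
      · intro a ha; simp only [Finset.mem_filter] at ha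
        exact Prod.ext rfl ha.2.2
      · intro a _; rfl
      · intro a ha; simp only [Finset.mem_filter] at ha
        simp only [ha.2.2]
    · refine Finset.sum_nbij' (fun q => (q.2, q.1)) (fun q => (q.2, q.1)) ?_ ?_ ?_ ?_ ?_
      · intro a ha; simp only [Finset.mem_filter] at ha ⊢
        exact ⟨Finset.mem_univ _, by omega⟩
      · intro a ha; simp only [Finset.mem_filter] at ha ⊢
        refine ⟨Finset.mem_univ _, ?_, ?_⟩ <;> omega
      · intro a _; rfl
      · intro a _; rfl
      · intro a _; exact hg _ _
  rw [h2]; ring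


lemma hasDerivAt_prodPow {M : ℕ} (c : Fin M → ℝ) (y : Fin M → ℝ) (t : ℝ)
    (h : ∀ K, 0 < t - y K) :
    HasDerivAt (fun t : ℝ => ∏ K, (t - y K) ^ (c K))
      ((∏ K, (t - y K) ^ (c K)) * ∑ K, c K * (t - y K)⁻¹) t := by
  have hK : ∀ K : Fin M, HasDerivAt (fun t : ℝ => (t - y K) ^ (c K))
      ((t - y K) ^ (c K) * (c K * (t - y K)⁻¹)) t := by
    intro K
    have h1 : HasDerivAt (fun t : ℝ => t - y K) 1 t := (hasDerivAt_id t).sub_const _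
    have h2 := (Real.hasDerivAt_rpow_const (p := c K) (Or.inl (h K).ne')).comp t h1
    have h3 : (t - y K) ^ (c K - 1) = (t - y K) ^ (c K) * (t - y K)⁻¹ := by
      rw [Real.rpow_sub (h K), Real.rpow_one, div_eq_mul_inv]
    have h4 : c K * (t - y K) ^ (c K - 1) * 1 = (t - y K) ^ (c K) * (c K * (t - y K)⁻¹) := by
      rw [h3]; ring
    rw [h4] at h2
    exact h2
  have h4 := HasDerivAt.fun_finsetProd (u := (Finset.univ : Finset (Fin M)))
    (f := fun K (t:ℝ) => (t - y K) ^ (c K))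
    (f' := fun K => (t - y K) ^ (c K) * (c K * (t - y K)⁻¹)) (fun K _ => hK K)
  refine h4.congr_deriv (Eq.symm ?_)
  rw [Finset.mul_sum]
  refine Finset.sum_congr rfl fun K _ => ?_
  simp only [smul_eq_mul]
  rw [← mul_assoc, ← mul_assoc,
    Finset.prod_erase_mul (univ : Finset (Fin M)) (fun J => (t - y J) ^ (c J)) (Finset.mem_univ K)]
  ring

lemma hasDerivAt_S {M : ℕ} (c : Fin M → ℝ) (y : Fin M → ℝ) (t : ℝ)
    (h : ∀ K, 0 < t - y K) :
    HasDerivAt (fun t : ℝ => ∑ K, c K * (t - y K)⁻¹)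
      (-∑ K, c K * ((t - y K) ^ 2)⁻¹) t := by
  have : HasDerivAt (fun t : ℝ => ∑ K, c K * (t - y K)⁻¹)
      (∑ K, c K * (-(1 / (t - y K) ^ 2))) t := by
    apply HasDerivAt.fun_sum
    intro K _
    have := (((hasDerivAt_id t).sub_const (y K)).inv (h K).ne').const_mul (c K)
    simpa [neg_div] using this
  convert this using 1
  rw [← Finset.sum_neg_distrib]
  refine Finset.sum_congr rfl fun K _ => ?_
  field_simp

lemma deriv2_x (κ : ℝ) {M : ℕ} (αv : Fin M → ℝ) (x : ℝ) (y : Fin M → ℝ)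
    (hxy : ∀ K, 0 < x - y K) :
    deriv (deriv fun t : ℝ => coulombH κ αv t y) x
      = coulombH κ αv x y *
        ((∑ K, (2 * (1 / Real.sqrt κ) * αv K) * (x - y K)⁻¹) ^ 2
          - ∑ K, (2 * (1 / Real.sqrt κ) * αv K) * ((x - y K) ^ 2)⁻¹) := by
  set c : Fin M → ℝ := fun K => 2 * (1 / Real.sqrt κ) * αv K with hc
  set B : ℝ := ∏ p ∈ univ.filter (fun p : Fin M × Fin M => p.1 < p.2),
      (y p.1 - y p.2) ^ (2 * αv p.1 * αv p.2) with hB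
  have hF : ∀ t, coulombH κ αv t y = (∏ K, (t - y K) ^ (c K)) * B := fun t => rfl
  have hev : ∀ᶠ t in nhds x, ∀ K, 0 < t - y K := by
    rw [Filter.eventually_all]
    intro K
    have hc2 : ContinuousAt (fun t : ℝ => t - y K) x := by fun_prop
    have := hc2 (Ioi_mem_nhds (hxy K))
    filter_upwards [this] with t ht
    exact ht
  have hder : deriv (fun t => coulombH κ αv t y)
      =ᶠ[nhds x] fun t => ((∏ K, (t - y K) ^ (c K)) * ∑ K, c K * (t - y K)⁻¹) * B := by
    filter_upwards [hev] with t ht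
    have hda : HasDerivAt (fun t => coulombH κ αv t y)
        (((∏ K, (t - y K) ^ c K) * ∑ K, c K * (t - y K)⁻¹) * B) t := by
      simp only [hF]
      exact (hasDerivAt_prodPow c y t ht).mul_const B
    exact hda.deriv
  rw [Filter.EventuallyEq.deriv_eq hder]
  have hP := hasDerivAt_prodPow c y x hxy
  have hS := hasDerivAt_S c y x hxy
  have h2 : HasDerivAt (fun t => ((∏ K, (t - y K) ^ c K) * ∑ K, c K * (t - y K)⁻¹) * B)
      ((((∏ K, (x - y K) ^ c K) * ∑ K, c K * (x - y K)⁻¹) * (∑ K, c K * (x - y K)⁻¹)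
        + (∏ K, (x - y K) ^ c K) * (-∑ K, c K * ((x - y K) ^ 2)⁻¹)) * B) x :=
    (hP.mul hS).mul_const B
  rw [h2.deriv, hF]
  ring

lemma deriv_yK (κ : ℝ) {M : ℕ} (αv : Fin M → ℝ) (x : ℝ) (y : Fin M → ℝ)
    (hxy : ∀ K, 0 < x - y K) (hyy : ∀ J K : Fin M, J < K → 0 < y J - y K) (K : Fin M) :
    deriv (fun s : ℝ => coulombH κ αv x (Function.update y K s)) (y K)
      = coulombH κ αv x y *
        (-((2 * (1 / Real.sqrt κ) * αv K) * (x - y K)⁻¹)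
          + ∑ q ∈ univ.filter (fun q : Fin M × Fin M => q.1 < q.2),
              (if q.1 = K then 2 * αv q.1 * αv q.2 * (y q.1 - y q.2)⁻¹
               else if q.2 = K then -(2 * αv q.1 * αv q.2 * (y q.1 - y q.2)⁻¹)
               else 0)) := by
  classical
  set c : Fin M → ℝ := fun K' => 2 * (1 / Real.sqrt κ) * αv K' with hc
  set w : Fin M × Fin M → ℝ := fun q => 2 * αv q.1 * αv q.2 with hw
  set P : Finset (Fin M × Fin M) := univ.filter (fun q : Fin M × Fin M => q.1 < q.2) with hP
  set e : Fin M × Fin M → ℝ := fun q =>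
      if q.1 = K then w q * (y q.1 - y q.2)⁻¹
      else if q.2 = K then -(w q * (y q.1 - y q.2)⁻¹)
      else 0 with he
  -- derivative of the first product
  have hA1 : HasDerivAt (fun s : ℝ => ∏ K', (x - Function.update y K s K') ^ (c K'))
      ((∏ K', (x - y K') ^ (c K')) * (-(c K * (x - y K)⁻¹))) (y K) := by
    have hfac : ∀ K' : Fin M, HasDerivAt (fun s : ℝ => (x - Function.update y K s K') ^ (c K'))
        (if K' = K then (x - y K) ^ (c K) * (-(c K * (x - y K)⁻¹)) else 0) (y K) := by
      intro K'
      by_cases hKK : K' = K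
      · subst hKK
        simp only [Function.update_self, if_pos rfl]
        have h1 : HasDerivAt (fun s : ℝ => x - s) (-1) (y K') :=
          (hasDerivAt_id (y K')).const_sub x
        have h2 := (Real.hasDerivAt_rpow_const (p := c K') (Or.inl (hxy K').ne')).comp (y K') h1
        have h3 : c K' * (x - y K') ^ (c K' - 1) * (-1)
            = (x - y K') ^ (c K') * (-(c K' * (x - y K')⁻¹)) := by
          rw [Real.rpow_sub (hxy K'), Real.rpow_one]; ring
        rw [h3] at h2
        exact h2
      · simp only [Function.update_of_ne hKK, if_neg hKK]
        exact hasDerivAt_const _ _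
    have h4 := HasDerivAt.fun_finsetProd (u := (univ : Finset (Fin M)))
      (f := fun K' (s : ℝ) => (x - Function.update y K s K') ^ (c K'))
      (f' := fun K' => if K' = K then (x - y K) ^ (c K) * (-(c K * (x - y K)⁻¹)) else 0)
      (fun K' _ => hfac K')
    refine h4.congr_deriv (Eq.symm ?_)
    rw [Finset.sum_eq_single_of_mem K (Finset.mem_univ K)
      (fun b _ hb => by simp [if_neg hb])]
    simp only [eq_self_iff_true, if_true, smul_eq_mul, Function.update_eq_self, ← mul_assoc]
    rw [Finset.prod_erase_mul (univ : Finset (Fin M))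
      (fun J => (x - y J) ^ (c J)) (Finset.mem_univ K)]
  -- derivative of the pair product
  have hA2 : HasDerivAt (fun s : ℝ => ∏ q ∈ P,
        (Function.update y K s q.1 - Function.update y K s q.2) ^ (w q))
      ((∏ q ∈ P, (y q.1 - y q.2) ^ (w q)) * (∑ q ∈ P, e q)) (y K) := by
    have hfac : ∀ q ∈ P, HasDerivAt (fun s : ℝ =>
          (Function.update y K s q.1 - Function.update y K s q.2) ^ (w q))
        ((y q.1 - y q.2) ^ (w q) * e q) (y K) := by
      intro q hq
      rw [hP, Finset.mem_filter] at hq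
      have hlt : q.1 < q.2 := hq.2
      by_cases h1 : q.1 = K
      · subst h1
        have h2 : q.2 ≠ q.1 := (ne_of_gt hlt)
        have hpos : 0 < y q.1 - y q.2 := hyy _ _ hlt
        simp only [he, if_pos rfl, Function.update_self, Function.update_of_ne h2]
        have hd : HasDerivAt (fun s : ℝ => s - y q.2) 1 (y q.1) :=
          (hasDerivAt_id _).sub_const _
        have hd2 := (Real.hasDerivAt_rpow_const (p := w q) (Or.inl hpos.ne')).comp (y q.1) hd
        have h3 : w q * (y q.1 - y q.2) ^ (w q - 1) * 1
            = (y q.1 - y q.2) ^ (w q) * (w q * (y q.1 - y q.2)⁻¹) := by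
          rw [Real.rpow_sub hpos, Real.rpow_one]; ring
        rw [h3] at hd2
        exact hd2
      · by_cases h2 : q.2 = K
        · subst h2
          have h1' : q.1 ≠ q.2 := h1
          have hpos : 0 < y q.1 - y q.2 := hyy _ _ hlt
          simp only [he, if_neg h1', if_pos rfl, Function.update_self,
            Function.update_of_ne h1']
          have hd : HasDerivAt (fun s : ℝ => y q.1 - s) (-1) (y q.2) :=
            (hasDerivAt_id _).const_sub _
          have hd2 := (Real.hasDerivAt_rpow_const (p := w q) (Or.inl hpos.ne')).comp (y q.2) hd
          have h3 : w q * (y q.1 - y q.2) ^ (w q - 1) * (-1)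
              = (y q.1 - y q.2) ^ (w q) * (-(w q * (y q.1 - y q.2)⁻¹)) := by
            rw [Real.rpow_sub hpos, Real.rpow_one]; ring
          rw [h3] at hd2
          exact hd2
        · simp only [he, if_neg h1, if_neg h2, mul_zero,
            Function.update_of_ne h1, Function.update_of_ne h2]
          exact hasDerivAt_const _ _
    have h4 := HasDerivAt.fun_finsetProd (u := P)
      (f := fun q (s : ℝ) => (Function.update y K s q.1 - Function.update y K s q.2) ^ (w q))
      (f' := fun q => (y q.1 - y q.2) ^ (w q) * e q) hfac
    refine h4.congr_deriv (Eq.symm ?_)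
    rw [Finset.mul_sum]
    refine Finset.sum_congr rfl fun q hq => ?_
    simp only [smul_eq_mul, Function.update_eq_self, ← mul_assoc]
    rw [Finset.prod_erase_mul P (fun p => (y p.1 - y p.2) ^ (w p)) hq]
  -- combine
  have hg := hA1.fun_mul hA2
  simp only [Function.update_eq_self] at hg
  have hco : coulombH κ αv x y
      = (∏ K', (x - y K') ^ (c K')) * ∏ q ∈ P, (y q.1 - y q.2) ^ (w q) := rfl
  have hgoal : (fun s : ℝ => coulombH κ αv x (Function.update y K s))
      = fun s : ℝ => (∏ K', (x - Function.update y K s K') ^ (c K')) *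
          ∏ q ∈ P, (Function.update y K s q.1 - Function.update y K s q.2) ^ (w q) := rfl
  rw [hgoal, hg.deriv, hco]
  ring

lemma key_identity (κ : ℝ) (hκ : 0 < κ) {M : ℕ} (αv : Fin M → ℝ)
    (x : ℝ) (y : Fin M → ℝ)
    (hxy : ∀ K, 0 < x - y K)
    (hyy : ∀ J K : Fin M, J < K → 0 < y J - y K) :
    κ / 2 * ((∑ K, (2 * (1 / Real.sqrt κ) * αv K) * (x - y K)⁻¹) ^ 2
        - ∑ K, (2 * (1 / Real.sqrt κ) * αv K) * ((x - y K) ^ 2)⁻¹)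
      + ∑ K, (-(2 * (x - y K)⁻¹)
            * (-((2 * (1 / Real.sqrt κ) * αv K) * (x - y K)⁻¹)
              + ∑ q ∈ univ.filter (fun q : Fin M × Fin M => q.1 < q.2),
                  (if q.1 = K then 2 * αv q.1 * αv q.2 * (y q.1 - y q.2)⁻¹
                   else if q.2 = K then -(2 * αv q.1 * αv q.2 * (y q.1 - y q.2)⁻¹)
                   else 0))
          - 2 * (αv K ^ 2 - (Real.sqrt κ / 2 - 2 / Real.sqrt κ) * αv K) * ((x - y K)⁻¹) ^ 2)
      = 0 := by
  classical
  have hs : 0 < Real.sqrt κ := Real.sqrt_pos.2 hκ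
  have hs2 : Real.sqrt κ ^ 2 = κ := Real.sq_sqrt hκ.le
  set s := Real.sqrt κ with hsdef
  set u : Fin M → ℝ := fun K => (x - y K)⁻¹ with hu
  set c : Fin M → ℝ := fun K => 2 * (1 / s) * αv K with hc
  set P : Finset (Fin M × Fin M) := univ.filter (fun q : Fin M × Fin M => q.1 < q.2) with hP
  set e : Fin M → Fin M × Fin M → ℝ := fun K q =>
      if q.1 = K then 2 * αv q.1 * αv q.2 * (y q.1 - y q.2)⁻¹
      else if q.2 = K then -(2 * αv q.1 * αv q.2 * (y q.1 - y q.2)⁻¹)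
      else 0 with he
  -- h1 : square expansion
  have h1 : κ / 2 * (∑ K, c K * u K) ^ 2
      = (∑ K, 2 * αv K ^ 2 * u K ^ 2)
        + 2 * ∑ q ∈ P, 2 * αv q.1 * αv q.2 * (u q.1 * u q.2) := by
    have e1 : κ / 2 * (∑ K, c K * u K) ^ 2
        = ∑ K, ∑ J, (κ / 2 * ((c K * u K) * (c J * u J))) := by
      rw [sq, Finset.sum_mul_sum, Finset.mul_sum]
      exact Finset.sum_congr rfl fun K _ => by rw [Finset.mul_sum]
    rw [e1, sq_split _ (fun J K => by ring)]
    congr 1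
    · exact Finset.sum_congr rfl fun K _ => by
        simp only [hc, ← hs2]; field_simp
    · rw [← hP]
      refine congrArg (2 * ·) (Finset.sum_congr rfl fun q _ => ?_)
      simp only [hc, ← hs2]; field_simp
  -- h2 : the cross terms
  have h2 : ∑ K, (2 * u K) * (∑ q ∈ P, e K q)
      = 2 * ∑ q ∈ P, 2 * αv q.1 * αv q.2 * (u q.1 * u q.2) := by
    have e1 : ∑ K, (2 * u K) * (∑ q ∈ P, e K q) = ∑ K, ∑ q ∈ P, (2 * u K) * e K q :=
      Finset.sum_congr rfl fun K _ => Finset.mul_sum _ _ _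
    rw [e1, Finset.sum_comm, Finset.mul_sum]
    refine Finset.sum_congr rfl fun q hq => ?_
    rw [hP, Finset.mem_filter] at hq
    have hlt : q.1 < q.2 := hq.2
    have hne : q.1 ≠ q.2 := ne_of_lt hlt
    have e2 : ∀ K : Fin M, (2 * u K) * e K q
        = (if q.1 = K then 2 * u q.1 * (2 * αv q.1 * αv q.2 * (y q.1 - y q.2)⁻¹) else 0)
          + (if q.2 = K then -(2 * u q.2 * (2 * αv q.1 * αv q.2 * (y q.1 - y q.2)⁻¹)) else 0) := by
      intro K
      by_cases hq1 : q.1 = K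
      · subst hq1
        have hq2 : q.2 ≠ q.1 := fun h => hne h.symm
        simp only [he, eq_self_iff_true, if_true, if_neg hq2]
        ring
      · by_cases hq2 : q.2 = K
        · subst hq2
          simp only [he, eq_self_iff_true, if_true, if_neg hq1]
          ring
        · simp only [he, if_neg hq1, if_neg hq2]
          ring
    rw [Finset.sum_congr rfl (fun K _ => e2 K), Finset.sum_add_distrib,
      Finset.sum_ite_eq, Finset.sum_ite_eq]
    simp only [Finset.mem_univ, if_true]
    have hd1 : x - y q.1 ≠ 0 := (hxy q.1).ne'
    have hd2 : x - y q.2 ≠ 0 := (hxy q.2).ne'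
    have hd3 : y q.1 - y q.2 ≠ 0 := (hyy _ _ hlt).ne'
    simp only [hu]
    field_simp
    ring
  -- h3 : diagonal terms
  have h3 : ∀ K : Fin M, -(2 * u K) * (-(c K * u K))
        - 2 * (αv K ^ 2 - (s / 2 - 2 / s) * αv K) * (u K) ^ 2
      = -(2 * αv K ^ 2 * u K ^ 2) + κ / 2 * (c K * ((x - y K) ^ 2)⁻¹) := by
    intro K
    have : ((x - y K) ^ 2)⁻¹ = (u K) ^ 2 := by
      simp only [hu]; rw [inv_pow]
    rw [this]
    simp only [hc, ← hs2]
    field_simp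
    ring
  -- assemble
  have e3 : ∀ K : Fin M, -(2 * u K)
        * (-(c K * u K) + ∑ q ∈ P, e K q)
        - 2 * (αv K ^ 2 - (s / 2 - 2 / s) * αv K) * (u K) ^ 2
      = (-(2 * u K) * (-(c K * u K))
          - 2 * (αv K ^ 2 - (s / 2 - 2 / s) * αv K) * (u K) ^ 2)
        - (2 * u K) * (∑ q ∈ P, e K q) := fun K => by ring
  calc κ / 2 * ((∑ K, c K * u K) ^ 2 - ∑ K, c K * ((x - y K) ^ 2)⁻¹)
      + ∑ K, (-(2 * u K) * (-(c K * u K) + ∑ q ∈ P, e K q)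
          - 2 * (αv K ^ 2 - (s / 2 - 2 / s) * αv K) * (u K) ^ 2)
      = κ / 2 * (∑ K, c K * u K) ^ 2 - ∑ K, κ / 2 * (c K * ((x - y K) ^ 2)⁻¹)
        + ((∑ K, (-(2 * u K) * (-(c K * u K))
            - 2 * (αv K ^ 2 - (s / 2 - 2 / s) * αv K) * (u K) ^ 2))
          - ∑ K, (2 * u K) * (∑ q ∈ P, e K q)) := by
        rw [Finset.sum_congr rfl (fun K _ => e3 K), Finset.sum_sub_distrib, ← Finset.mul_sum]
        ring
    _ = 0 := by
        rw [Finset.sum_congr rfl (fun K _ => h3 K), Finset.sum_add_distrib, h1, h2,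
          Finset.sum_neg_distrib]
        ring

lemma aux_div (a h D d : ℝ) (ha : a ≠ 0) :
    2 / (-a) * (h * D) - d / (-a) ^ 2 * h = h * (-(2 * a⁻¹) * D - d * (a⁻¹) ^ 2) := by
  have h1 : 2 / (-a) = -(2 * a⁻¹) := by rw [div_neg, div_eq_mul_inv]
  have h2 : d / (-a) ^ 2 = d * (a⁻¹) ^ 2 := by rw [neg_sq, div_eq_mul_inv, inv_pow]
  rw [h1, h2]
  ring

end CoulombNullAux

/-- `coulombH` satisfies the null field equation
`(κ/2)∂ₓ² h + ∑_K (2/(y_K-x) ∂_{y_K} - 2δ_K/(y_K-x)²) h = 0`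
where `δ_K = αK² - (√κ/2 - 2/√κ)αK`, on the domain where all factors are positive. -/
theorem coulomb_null_field (κ : ℝ) (hκ : 0 < κ) {M : ℕ} (αv : Fin M → ℝ)
    (x : ℝ) (y : Fin M → ℝ)
    (hxy : ∀ K, 0 < x - y K)
    (hyy : ∀ J K : Fin M, J < K → 0 < y J - y K) :
    κ / 2 * deriv (deriv fun t : ℝ => coulombH κ αv t y) x
      + ∑ K, (2 / (y K - x) * deriv (fun s : ℝ => coulombH κ αv x (Function.update y K s)) (y K)
          - 2 * (αv K ^ 2 - (Real.sqrt κ / 2 - 2 / Real.sqrt κ) * αv K) / (y K - x) ^ 2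
            * coulombH κ αv x y)
      = 0 := by
  classical
  open Finset CoulombNullAux in
  rw [deriv2_x κ αv x y hxy]
  have hterm : ∀ K : Fin M,
      2 / (y K - x) * deriv (fun s : ℝ => coulombH κ αv x (Function.update y K s)) (y K)
        - 2 * (αv K ^ 2 - (Real.sqrt κ / 2 - 2 / Real.sqrt κ) * αv K) / (y K - x) ^ 2
          * coulombH κ αv x y
      = coulombH κ αv x y *
          (-(2 * (x - y K)⁻¹)
              * (-((2 * (1 / Real.sqrt κ) * αv K) * (x - y K)⁻¹)
                + ∑ q ∈ univ.filter (fun q : Fin M × Fin M => q.1 < q.2),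
                    (if q.1 = K then 2 * αv q.1 * αv q.2 * (y q.1 - y q.2)⁻¹
                     else if q.2 = K then -(2 * αv q.1 * αv q.2 * (y q.1 - y q.2)⁻¹)
                     else 0))
            - 2 * (αv K ^ 2 - (Real.sqrt κ / 2 - 2 / Real.sqrt κ) * αv K)
              * ((x - y K)⁻¹) ^ 2) := by
    intro K
    rw [CoulombNullAux.deriv_yK κ αv x y hxy hyy K]
    have hne : x - y K ≠ 0 := (hxy K).ne'
    have hyx : y K - x = -(x - y K) := by ring
    rw [hyx]
    exact CoulombNullAux.aux_div (x - y K) (coulombH κ αv x y) _ _ hne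
  rw [Finset.sum_congr rfl (fun K _ => hterm K), ← Finset.mul_sum]
  have hkey := CoulombNullAux.key_identity κ hκ αv x y hxy hyy
  linear_combination (coulombH κ αv x y) * hkey
end
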